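/- For a holomorphic self-map θ of the unit disk, the identity (1/4)Δ[z ↦ (1-|θ(z)|²)/(1-|z|²)] = (1+|z|²)(1-|θ(z)|²)/(1-|z|²)³ − 2Re(z·conj(θ(z))·θ'(z))/(1-|z|²)² − |θ'(z)|²/(1-|z|²) holds for all z in the open unit disk. -/

import Mathlib

/-!
Along a line `t ↦ a + t v` the function `θ` restricts to a curve with velocity `θ' v` and
acceleration `θ'' v²`, so the second derivative of the kernel along the line follows from the
quotient rule and `(‖c‖²)'' = 2 (‖c'‖² + ⟪c, c''⟫)`. Summing the directions `v = 1` and `v = I`,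
the `θ''` terms cancel because `I² = -1`, and what remains is `4 ×` the right-hand side.
-/

/-- The planar Laplacian `Δu = ∂²u/∂x² + ∂²u/∂y²` of `u : ℂ → ℝ` at `z = x + iy`. -/
noncomputable def planarLaplacian (u : ℂ → ℝ) (z : ℂ) : ℝ :=
  deriv (fun x : ℝ => deriv (fun x' : ℝ => u ((x' : ℂ) + z.im * Complex.I)) x) z.re +
  deriv (fun y : ℝ => deriv (fun y' : ℝ => u ((z.re : ℂ) + y' * Complex.I)) y) z.im

open Complex Filter Topology
open scoped InnerProductSpace

lemma one_sub_norm_sq_ne_zero {E : Type*} [SeminormedAddGroup E] {x : E} (hx : ‖x‖ ≠ 1) :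
    1 - ‖x‖ ^ 2 ≠ 0 := by
  rwa [sub_ne_zero, ne_comm, Ne, pow_eq_one_iff_of_nonneg (norm_nonneg _) two_ne_zero]

lemma deriv_deriv_div_eq {N D N' D' : ℝ → ℝ} {N'' D'' t₀ : ℝ}
    (hN : ∀ᶠ t in 𝓝 t₀, HasDerivAt N (N' t) t) (hD : ∀ᶠ t in 𝓝 t₀, HasDerivAt D (D' t) t)
    (hN' : HasDerivAt N' N'' t₀) (hD' : HasDerivAt D' D'' t₀) (hD₀ : D t₀ ≠ 0) :
    deriv (deriv fun t => N t / D t) t₀ =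
      N'' / D t₀ - 2 * N' t₀ * D' t₀ / D t₀ ^ 2 - N t₀ * D'' / D t₀ ^ 2 +
        2 * N t₀ * D' t₀ ^ 2 / D t₀ ^ 3 := by
  have hN₀ := hN.self_of_nhds
  have hD₀' := hD.self_of_nhds
  have h_deriv : deriv (fun t => N t / D t) =ᶠ[𝓝 t₀]
      fun t => (N' t * D t - N t * D' t) / D t ^ 2 := by
    filter_upwards [hN, hD, hD₀'.continuousAt.eventually_ne hD₀] with t hNt hDt hDt₀
    exact (hNt.fun_div hDt hDt₀).deriv
  rw [h_deriv.deriv_eq, (((hN'.fun_mul hD₀').fun_sub (hN₀.fun_mul hD')).fun_div (hD₀'.fun_pow 2)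
    (pow_ne_zero 2 hD₀)).deriv]
  field_simp
  ring

section InnerProductSpace

variable {E : Type*} [NormedAddCommGroup E] [InnerProductSpace ℝ E]

lemma HasDerivAt.inner_deriv_self {f f' : ℝ → E} {f'' : E} {t₀ : ℝ}
    (hf : HasDerivAt f (f' t₀) t₀) (hf' : HasDerivAt f' f'' t₀) :
    HasDerivAt (fun t => ⟪f t, f' t⟫_ℝ) (‖f' t₀‖ ^ 2 + ⟪f t₀, f''⟫_ℝ) t₀ :=
  (hf.inner ℝ hf').congr_deriv (by rw [real_inner_self_eq_norm_sq, add_comm])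

lemma deriv_deriv_one_sub_norm_sq_div {f g f' g' : ℝ → E} {f'' g'' : E} {t₀ : ℝ}
    (hf : ∀ᶠ t in 𝓝 t₀, HasDerivAt f (f' t) t) (hg : ∀ᶠ t in 𝓝 t₀, HasDerivAt g (g' t) t)
    (hf' : HasDerivAt f' f'' t₀) (hg' : HasDerivAt g' g'' t₀) (hg₀ : ‖g t₀‖ ≠ 1) :
    deriv (deriv fun t => (1 - ‖f t‖ ^ 2) / (1 - ‖g t‖ ^ 2)) t₀ =
      -2 * (‖f' t₀‖ ^ 2 + ⟪f t₀, f''⟫_ℝ) / (1 - ‖g t₀‖ ^ 2) -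
        8 * ⟪f t₀, f' t₀⟫_ℝ * ⟪g t₀, g' t₀⟫_ℝ / (1 - ‖g t₀‖ ^ 2) ^ 2 +
        2 * (1 - ‖f t₀‖ ^ 2) * (‖g' t₀‖ ^ 2 + ⟪g t₀, g''⟫_ℝ) / (1 - ‖g t₀‖ ^ 2) ^ 2 +
        8 * (1 - ‖f t₀‖ ^ 2) * ⟪g t₀, g' t₀⟫_ℝ ^ 2 / (1 - ‖g t₀‖ ^ 2) ^ 3 := by
  have hN : ∀ᶠ t in 𝓝 t₀, HasDerivAt (fun t => 1 - ‖f t‖ ^ 2) (-(2 * ⟪f t, f' t⟫_ℝ)) t := by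
    filter_upwards [hf] with t ht
    simpa using ht.norm_sq.const_sub 1
  have hD : ∀ᶠ t in 𝓝 t₀, HasDerivAt (fun t => 1 - ‖g t‖ ^ 2) (-(2 * ⟪g t, g' t⟫_ℝ)) t := by
    filter_upwards [hg] with t ht
    simpa using ht.norm_sq.const_sub 1
  rw [deriv_deriv_div_eq hN hD ((hf.self_of_nhds.inner_deriv_self hf').const_mul 2).neg
    ((hg.self_of_nhds.inner_deriv_self hg').const_mul 2).neg (one_sub_norm_sq_ne_zero hg₀)]
  ring

end InnerProductSpace

lemma DifferentiableOn.eventually_hasDerivAt_comp {φ : ℂ → ℂ} {U : Set ℂ}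
    (hφ : DifferentiableOn ℂ φ U) (hU : IsOpen U) {γ : ℝ → ℂ} {v : ℂ}
    (hγ : ∀ t, HasDerivAt γ v t) {t₀ : ℝ} (ht₀ : γ t₀ ∈ U) :
    ∀ᶠ t in 𝓝 t₀, HasDerivAt (fun t => φ (γ t)) (_root_.deriv φ (γ t) * v) t := by
  filter_upwards [(hγ t₀).continuousAt.preimage_mem_nhds (hU.mem_nhds ht₀)] with t ht
  exact (hφ.differentiableAt (hU.mem_nhds ht)).hasDerivAt.comp t (hγ t)

/-- The diagonal `k_θ(w, w)` of the de Branges–Rovnyak kernel of `θ`. -/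
noncomputable def diagKernel (θ : ℂ → ℂ) (w : ℂ) : ℝ :=
  (1 - ‖θ w‖ ^ 2) / (1 - ‖w‖ ^ 2)

lemma deriv_deriv_diagKernel_comp {θ : ℂ → ℂ} {U : Set ℂ}
    (hθ : DifferentiableOn ℂ θ U) (hU : IsOpen U) {γ : ℝ → ℂ} {v : ℂ}
    (hγ : ∀ t, HasDerivAt γ v t) {t₀ : ℝ} (ht₀ : γ t₀ ∈ U) (hγ₀ : ‖γ t₀‖ ≠ 1) :
    deriv (deriv fun t => diagKernel θ (γ t)) t₀ =
      -2 * (‖deriv θ (γ t₀) * v‖ ^ 2 + ⟪θ (γ t₀), deriv (deriv θ) (γ t₀) * v * v⟫_ℝ) /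
          (1 - ‖γ t₀‖ ^ 2) -
        8 * ⟪θ (γ t₀), deriv θ (γ t₀) * v⟫_ℝ * ⟪γ t₀, v⟫_ℝ / (1 - ‖γ t₀‖ ^ 2) ^ 2 +
        2 * (1 - ‖θ (γ t₀)‖ ^ 2) * ‖v‖ ^ 2 / (1 - ‖γ t₀‖ ^ 2) ^ 2 +
        8 * (1 - ‖θ (γ t₀)‖ ^ 2) * ⟪γ t₀, v⟫_ℝ ^ 2 / (1 - ‖γ t₀‖ ^ 2) ^ 3 := by
  have hθ' := (hθ.deriv hU).eventually_hasDerivAt_comp hU hγ ht₀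
  have h := deriv_deriv_one_sub_norm_sq_div (hθ.eventually_hasDerivAt_comp hU hγ ht₀)
    (Eventually.of_forall hγ) (hθ'.self_of_nhds.mul_const v) (hasDerivAt_const t₀ v) hγ₀
  rwa [inner_zero_right, add_zero] at h

theorem laplacian_diag_kernel_identity_general
    (θ : ℂ → ℂ) (hθ : DifferentiableOn ℂ θ (Metric.ball 0 1)) :
    ∀ z ∈ Metric.ball (0:ℂ) 1,
      (1 / 4) * planarLaplacian (fun w => (1 - ‖θ w‖ ^ 2) / (1 - ‖w‖ ^ 2)) z =
        (1 + ‖z‖ ^ 2) * (1 - ‖θ z‖ ^ 2) / (1 - ‖z‖ ^ 2) ^ 3 -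
        2 * (z * (starRingEnd ℂ) (θ z) * deriv θ z).re / (1 - ‖z‖ ^ 2) ^ 2 -
        ‖deriv θ z‖ ^ 2 / (1 - ‖z‖ ^ 2) := by
  intro z hz
  have hz₁ : ‖z‖ ≠ 1 := (mem_ball_zero_iff.mp hz).ne
  have hx := deriv_deriv_diagKernel_comp hθ Metric.isOpen_ball
    (γ := fun t : ℝ => (t : ℂ) + z.im * I) (v := 1) (t₀ := z.re)
    (fun t => by simpa using ((hasDerivAt_id t).ofReal_comp).add_const ((z.im : ℂ) * I))
    (by simpa only [re_add_im] using hz) (by simpa only [re_add_im] using hz₁)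
  have hy := deriv_deriv_diagKernel_comp hθ Metric.isOpen_ball
    (γ := fun t : ℝ => (z.re : ℂ) + t * I) (v := I) (t₀ := z.im)
    (fun t => by simpa using (((hasDerivAt_id t).ofReal_comp).mul_const I).const_add (z.re : ℂ))
    (by simpa only [re_add_im] using hz) (by simpa only [re_add_im] using hz₁)
  -- `I * I = -1` turns the `θ''` term of `hy` into the negative of that of `hx`.
  simp only [re_add_im, mul_one, norm_mul, norm_one, norm_I, mul_assoc _ I I, I_mul_I,
    mul_neg_one, inner_neg_right] at hx hy
  have h_mixed : ⟪θ z, deriv θ z⟫_ℝ * ⟪z, 1⟫_ℝ + ⟪θ z, deriv θ z * I⟫_ℝ * ⟪z, I⟫_ℝ =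
      (z * (starRingEnd ℂ) (θ z) * deriv θ z).re := by
    simp only [Complex.inner, mul_re, mul_im, conj_re, conj_im, one_re, one_im, I_re, I_im]
    ring
  have h_radial : ⟪z, 1⟫_ℝ ^ 2 + ⟪z, I⟫_ℝ ^ 2 = ‖z‖ ^ 2 := by
    simp only [Complex.inner, mul_re, conj_re, conj_im, one_re, one_im, I_re, I_im,
      Complex.sq_norm, normSq_apply]
    ring
  have hD := one_sub_norm_sq_ne_zero hz₁
  change (1 / 4) * planarLaplacian (diagKernel θ) z = _
  rw [planarLaplacian, hx, hy, ← h_mixed]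
  field_simp
  linear_combination 8 * (1 - ‖θ z‖ ^ 2) * h_radial

/-- The identity
`(1/4)Δ[(1-|θ|²)/(1-|z|²)] = (1+|z|²)(1-|θ(z)|²)/(1-|z|²)³
  − 2Re(z·conj(θ(z))·θ'(z))/(1-|z|²)² − |θ'(z)|²/(1-|z|²)`
for a holomorphic self-map `θ` of the unit disk. -/
theorem laplacian_diag_kernel_identity
    (θ : ℂ → ℂ) (hθ : DifferentiableOn ℂ θ (Metric.ball 0 1))
    (hmaps : Set.MapsTo θ (Metric.ball 0 1) (Metric.ball 0 1)) :
    ∀ z ∈ Metric.ball (0:ℂ) 1,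
      (1 / 4) * planarLaplacian (fun w => (1 - ‖θ w‖ ^ 2) / (1 - ‖w‖ ^ 2)) z =
        (1 + ‖z‖ ^ 2) * (1 - ‖θ z‖ ^ 2) / (1 - ‖z‖ ^ 2) ^ 3 -
        2 * (z * (starRingEnd ℂ) (θ z) * deriv θ z).re / (1 - ‖z‖ ^ 2) ^ 2 -
        ‖deriv θ z‖ ^ 2 / (1 - ‖z‖ ^ 2) :=
  laplacian_diag_kernel_identity_general θ hθ
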